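/- For a symmetric positive definite matrix A ∈ ℝ^{n×n}, the spectral radius of the Gauss–Seidel iteration matrix (D - E)^{-1} E^T is strictly less than 1, so Gauss–Seidel converges for any initial approximation. -/

import Mathlib

/-!
If `Gv = μv` with `v ≠ 0`, then `Eᵀv = μ (D - E) v`. Pairing with `v` and writing `d = v*Dv > 0`,
`z = v*Ev`, this reads `conj z = μ (d - z)`, while positivity of `v*Av = d - z - conj z` gives
`|d - z|² - |z|² = d (d - 2 Re z) > 0`; hence `|μ| = |z| / |d - z| < 1`. So the spectral radius of
`G` is `< 1`, Gelfand's formula gives `Gᵏ → 0`, and the error `xₖ - A⁻¹b = Gᵏ (x₀ - A⁻¹b)` of the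
iteration tends to zero.
-/

open Filter Topology
open scoped ComplexConjugate ComplexOrder NNReal

theorem tendsto_pow_atTop_nhds_zero_of_spectralRadius_lt_one {A : Type*} [NormedRing A]
    [NormedAlgebra ℂ A] [CompleteSpace A] {a : A} (ha : spectralRadius ℂ a < 1) :
    Tendsto (a ^ ·) atTop (𝓝 0) := by
  obtain ⟨c, hρc, hc1⟩ := exists_between ha
  lift c to ℝ≥0 using (hc1.trans ENNReal.one_lt_top).ne
  have hbound : ∀ᶠ k : ℕ in atTop, ‖a ^ k‖ ≤ (c : ℝ) ^ k := by
    filter_upwards [(spectrum.pow_norm_pow_one_div_tendsto_nhds_spectralRadius a).eventually_lt_const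
      hρc, eventually_ne_atTop 0] with k hk hk0
    rw [ENNReal.ofReal_lt_iff_lt_toReal (by positivity) ENNReal.coe_ne_top, ENNReal.coe_toReal,
      one_div] at hk
    rw [← Real.rpow_inv_natCast_pow (norm_nonneg (a ^ k)) hk0]
    exact pow_le_pow_left₀ (by positivity) hk.le k
  refine squeeze_zero_norm' hbound (tendsto_pow_atTop_nhds_zero_of_lt_one c.coe_nonneg ?_)
  exact_mod_cast hc1

theorem Complex.norm_lt_norm_sub_of_pos {d z : ℂ} (hd : 0 < d) (h : 0 < d - z - conj z) :
    ‖z‖ < ‖d - z‖ := by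
  obtain ⟨hd_re, hd_im⟩ := Complex.pos_iff.mp hd
  have h_re : 0 < d.re - 2 * z.re := by
    have := (Complex.pos_iff.mp h).1
    simp only [sub_re, conj_re] at this
    linarith
  rw [← sq_lt_sq₀ (norm_nonneg _) (norm_nonneg _), Complex.sq_norm, Complex.sq_norm, normSq_apply,
    normSq_apply]
  simp only [sub_re, sub_im, ← hd_im]
  nlinarith [mul_pos hd_re h_re]

namespace Matrix

section Splitting

variable {n R : Type*} [LinearOrder n] [DecidableEq n] [CommRing R] {A D E : Matrix n n R}

theorem eq_sub_sub_transpose_of_isSymm (hA : A.IsSymm) (hD : D = diagonal fun i ↦ A i i)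
    (hE : ∀ i j, E i j = if j < i then -A i j else 0) : A = D - E - Eᵀ := by
  ext i j
  rcases lt_trichotomy i j with h | rfl | h
  · simp [hD, hE, h, h.ne, not_lt_of_gt h, hA.apply i j]
  · simp [hD, hE]
  · simp [hD, hE, h, h.ne', not_lt_of_gt h]

theorem det_sub_of_eq_diagonal [Fintype n] (hD : D = diagonal fun i ↦ A i i)
    (hE : ∀ i j, E i j = if j < i then -A i j else 0) : (D - E).det = ∏ i, A i i := by
  have hlower : (D - E).IsLowerTriangular := fun i j (hij : i < j) ↦ by
    simp [hD, hE, hij.ne, not_lt_of_gt hij]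
  rw [det_of_isLowerTriangular _ hlower]
  simp [hD, hE]

end Splitting

variable {n : Type*} [Fintype n]

theorem re_star_dotProduct_map_ofReal_mulVec (M : Matrix n n ℝ) (v : n → ℂ) :
    (star v ⬝ᵥ M.map Complex.ofReal *ᵥ v).re =
      (fun i ↦ (v i).re) ⬝ᵥ M *ᵥ (fun i ↦ (v i).re) +
        (fun i ↦ (v i).im) ⬝ᵥ M *ᵥ (fun i ↦ (v i).im) := by
  simp only [dotProduct, mulVec, map_apply, Finset.mul_sum, Pi.star_apply, Complex.re_sum,
    ← Finset.sum_add_distrib]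
  refine Finset.sum_congr rfl fun i _ ↦ Finset.sum_congr rfl fun j _ ↦ ?_
  simp [Complex.mul_re, RCLike.star_def]

theorem PosDef.map_ofReal {M : Matrix n n ℝ} (hM : M.PosDef) :
    (M.map Complex.ofReal).PosDef := by
  have hherm : (M.map Complex.ofReal).IsHermitian := hM.isHermitian.map _ fun x ↦ by simp
  refine PosDef.of_dotProduct_mulVec_pos hherm fun v hv ↦
    Complex.pos_iff.mpr ⟨?_, (hherm.im_star_dotProduct_mulVec_self v).symm⟩
  have hreim : (fun i ↦ (v i).re) ≠ 0 ∨ (fun i ↦ (v i).im) ≠ 0 := by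
    contrapose! hv
    funext i
    exact Complex.ext (congrFun hv.1 i) (congrFun hv.2 i)
  have hnonneg (w : n → ℝ) : 0 ≤ w ⬝ᵥ M *ᵥ w := by
    simpa using hM.posSemidef.dotProduct_mulVec_nonneg w
  have hpos {w : n → ℝ} (hw : w ≠ 0) : 0 < w ⬝ᵥ M *ᵥ w := by
    simpa using hM.dotProduct_mulVec_pos hw
  rw [re_star_dotProduct_map_ofReal_mulVec]
  rcases hreim with hre | him
  · exact add_pos_of_pos_of_nonneg (hpos hre) (hnonneg _)
  · exact add_pos_of_nonneg_of_pos (hnonneg _) (hpos him)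

theorem norm_lt_one_of_conjTranspose_mulVec_eq_smul {A D E : Matrix n n ℂ} (hA : A.PosDef)
    (hD : D.PosDef) (hADE : A = D - E - Eᴴ) {μ : ℂ} {v : n → ℂ} (hv : v ≠ 0)
    (hμ : Eᴴ *ᵥ v = μ • ((D - E) *ᵥ v)) : ‖μ‖ < 1 := by
  have hconj : star v ⬝ᵥ Eᴴ *ᵥ v = conj (star v ⬝ᵥ E *ᵥ v) := by
    rw [star_dotProduct, star_mulVec, conjTranspose_conjTranspose, ← dotProduct_mulVec]
    rfl
  set d := star v ⬝ᵥ D *ᵥ v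
  set z := star v ⬝ᵥ E *ᵥ v
  have hz : conj z = μ * (d - z) := by
    rw [← hconj, hμ, dotProduct_smul, sub_mulVec, dotProduct_sub, smul_eq_mul]
  have hd : 0 < d := hD.dotProduct_mulVec_pos hv
  have ha : 0 < d - z - conj z := by
    simpa only [hADE, sub_mulVec, dotProduct_sub, hconj] using hA.dotProduct_mulVec_pos hv
  have hlt := Complex.norm_lt_norm_sub_of_pos hd ha
  have hpos : 0 < ‖d - z‖ := (norm_nonneg z).trans_lt hlt
  refine lt_of_mul_lt_mul_right (a := ‖d - z‖) ?_ hpos.le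
  rwa [← norm_mul, ← hz, Complex.norm_conj, one_mul]

variable [DecidableEq n]

theorem norm_lt_one_of_map_inv_sub_mul_transpose_mulVec_eq_smul {A D E : Matrix n n ℝ}
    (hA : A.PosDef) (hD : D.PosDef) (hADE : A = D - E - Eᵀ) (hdet : IsUnit (D - E).det)
    {μ : ℂ} {v : n → ℂ} (hv : v ≠ 0)
    (hμ : ((D - E)⁻¹ * Eᵀ).map Complex.ofReal *ᵥ v = μ • v) : ‖μ‖ < 1 := by
  refine norm_lt_one_of_conjTranspose_mulVec_eq_smul hA.map_ofReal hD.map_ofReal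
    (E := E.map Complex.ofReal) ?_ hv ?_
  · rw [hADE]
    ext
    simp
  · have hEconj : (E.map Complex.ofReal)ᴴ =
        (D - E).map Complex.ofReal * ((D - E)⁻¹ * Eᵀ).map Complex.ofReal := by
      refine .trans ?_ (Matrix.map_mul (f := Complex.ofRealHom))
      rw [mul_nonsing_inv_cancel_left _ _ hdet]
      ext
      simp
    rw [hEconj, ← mulVec_mulVec, hμ, mulVec_smul, Matrix.map_sub _ Complex.ofReal_sub]

theorem exists_mulVec_eq_smul_of_mem_spectrum {K : Type*} [Field K] {M : Matrix n n K} {μ : K}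
    (hμ : μ ∈ spectrum K M) : ∃ v ≠ 0, M *ᵥ v = μ • v := by
  rw [← spectrum_toLin', ← Module.End.hasEigenvalue_iff_mem_spectrum] at hμ
  obtain ⟨v, hv⟩ := hμ.exists_hasEigenvector
  exact ⟨v, hv.2, by simpa using hv.apply_eq_smul⟩

theorem tendsto_pow_atTop_nhds_zero_of_forall_mulVec_eq_smul {M : Matrix n n ℂ}
    (hM : ∀ (μ : ℂ) (v : n → ℂ), v ≠ 0 → M *ᵥ v = μ • v → ‖μ‖ < 1) :
    Tendsto (M ^ ·) atTop (𝓝 0) := by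
  cases isEmpty_or_nonempty n
  · simpa only [Subsingleton.elim _ (0 : Matrix n n ℂ)] using tendsto_const_nhds
  -- Any algebra norm on matrices will do: all of them induce the entrywise topology.
  open scoped Matrix.Norms.Operator in
  refine tendsto_pow_atTop_nhds_zero_of_spectralRadius_lt_one ?_
  have := spectrum.spectralRadius_lt_of_forall_lt M (r := 1) fun μ hμ ↦ by
    obtain ⟨v, hv, hMv⟩ := exists_mulVec_eq_smul_of_mem_spectrum hμ
    exact_mod_cast hM μ v hv hMv
  exact_mod_cast this

theorem tendsto_pow_atTop_nhds_zero_of_map_ofReal {M : Matrix n n ℝ}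
    (hM : Tendsto ((M.map Complex.ofReal) ^ ·) atTop (𝓝 0)) : Tendsto (M ^ ·) atTop (𝓝 0) := by
  have hre : Continuous fun P : Matrix n n ℂ ↦ P.map Complex.re :=
    continuous_id.matrix_map Complex.continuous_re
  have hpow (k : ℕ) : ((M.map Complex.ofReal) ^ k).map Complex.re = M ^ k := by
    have hmap : (M ^ k).map Complex.ofReal = (M.map Complex.ofReal) ^ k :=
      map_pow Complex.ofRealHom.mapMatrix M k
    rw [← hmap]
    ext
    simp
  simpa [Function.comp_def, hpow] using (hre.tendsto 0).comp hM

theorem tendsto_inv_mulVec_of_splitting_iteration {K : Type*} [Field K] [TopologicalSpace K]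
    [IsTopologicalRing K] {A L N : Matrix n n K} (hA : A = L - N) (hL : IsUnit L.det)
    (hAdet : IsUnit A.det) {b : n → K} {x : ℕ → n → K}
    (hx : ∀ k, x (k + 1) = L⁻¹ *ᵥ (N *ᵥ x k + b))
    (hpow : Tendsto ((L⁻¹ * N) ^ ·) atTop (𝓝 0)) : Tendsto x atTop (𝓝 (A⁻¹ *ᵥ b)) := by
  set xs := A⁻¹ *ᵥ b
  have hfix : L⁻¹ *ᵥ (N *ᵥ xs + b) = xs := by
    have hb : b = A *ᵥ xs := by rw [mulVec_mulVec, mul_nonsing_inv _ hAdet, one_mulVec]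
    rw [hb, hA, sub_mulVec, add_sub_cancel, mulVec_mulVec, nonsing_inv_mul _ hL, one_mulVec]
  have hstep (k : ℕ) : x (k + 1) - xs = (L⁻¹ * N) *ᵥ (x k - xs) := by
    conv_lhs => rw [hx k, ← hfix]
    rw [← mulVec_sub, add_sub_add_right_eq_sub, ← mulVec_sub, mulVec_mulVec]
  have herr (k : ℕ) : x k - xs = (L⁻¹ * N) ^ k *ᵥ (x 0 - xs) := by
    induction k with
    | zero => simp
    | succ k ih => rw [hstep, ih, mulVec_mulVec, ← pow_succ']
  rw [← tendsto_sub_nhds_zero_iff, funext herr, ← zero_mulVec (x 0 - xs)]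
  exact (continuous_id.matrix_mulVec continuous_const).tendsto 0 |>.comp hpow

end Matrix

open Matrix Finset in
/-- For a symmetric positive definite matrix A = D - E - Eᵀ, every eigenvalue
of the Gauss–Seidel iteration matrix (D - E)⁻¹ Eᵀ has modulus < 1 (spectral
radius < 1), so Gauss–Seidel converges from any initial approximation. -/
theorem gaussSeidel_converges_of_posDef (n : ℕ)
    (A : Matrix (Fin n) (Fin n) ℝ) (hA : A.PosDef)
    (D E : Matrix (Fin n) (Fin n) ℝ)
    (hD : D = Matrix.diagonal (fun i => A i i))
    (hE : ∀ i j, E i j = if j < i then - A i j else 0)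
    (G : Matrix (Fin n) (Fin n) ℝ)
    (hG : G = (D - E)⁻¹ * Eᵀ) :
    (∀ (μ : ℂ) (v : Fin n → ℂ), v ≠ 0 →
        (G.map (Complex.ofReal)).mulVec v = μ • v → ‖μ‖ < 1) ∧
    ∀ (b : Fin n → ℝ) (x : ℕ → (Fin n → ℝ)),
      (∀ k, x (k + 1) = (D - E)⁻¹.mulVec (Eᵀ.mulVec (x k) + b)) →
      Filter.Tendsto x Filter.atTop (nhds (A⁻¹.mulVec b)) := by
  have hsplit : A = D - E - Eᵀ :=
    eq_sub_sub_transpose_of_isSymm (isHermitian_iff_isSymm.mp hA.isHermitian) hD hE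
  have hDpos : D.PosDef := hD ▸ posDef_diagonal_iff.mpr fun _ ↦ hA.diag_pos
  have hdet : IsUnit (D - E).det := by
    rw [det_sub_of_eq_diagonal hD hE]
    exact (prod_pos fun _ _ ↦ hA.diag_pos).ne'.isUnit
  have heig : ∀ (μ : ℂ) (v : Fin n → ℂ), v ≠ 0 → G.map Complex.ofReal *ᵥ v = μ • v → ‖μ‖ < 1 :=
    fun μ v hv hGv ↦
      norm_lt_one_of_map_inv_sub_mul_transpose_mulVec_eq_smul hA hDpos hsplit hdet hv (hG ▸ hGv)
  refine ⟨heig, fun b x hx ↦ tendsto_inv_mulVec_of_splitting_iteration hsplit hdet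
    (A.isUnit_iff_isUnit_det.mp hA.isUnit) hx ?_⟩
  rw [← hG]
  exact tendsto_pow_atTop_nhds_zero_of_map_ofReal
    (tendsto_pow_atTop_nhds_zero_of_forall_mulVec_eq_smul heig)
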